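/- Let A ∈ Herm⁺_{n,r} and write A = Q diag(M_A, 0) Q* with Q ∈ U(n) and M_A ∈ Herm_r^{++}. Define V_A = { Q diag(M,0) Q* : M ∈ Herm_r } and H_A = { Q [[0,B],[B*,0]] Q* : B ∈ ℂ^{r×(n−r)} }. Then V_A and H_A are independent of the choice of decomposition (Q, M_A), V_A = ker(dπ_{n,r} at A) where π_{n,r}(A) = ker(A)^⊥, and T_A Herm⁺_{n,r} = V_A ⊕ H_A. -/

import Mathlib

noncomputable section

open Matrix Finset
open scoped ComplexOrder

abbrev Mat (p : ℕ) := Matrix (Fin p) (Fin p) ℂ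
abbrev Euc (n : ℕ) := EuclideanSpace ℂ (Fin n)

/-- Square root of a PSD matrix, as defined in Mathlib of December 2024 (since removed). -/
def Matrix.PosSemidef.sqrt {m 𝕜 : Type*} [Fintype m] [DecidableEq m] [RCLike 𝕜]
    {A : Matrix m m 𝕜} (hA : A.PosSemidef) : Matrix m m 𝕜 :=
  hA.1.eigenvectorUnitary.1 * Matrix.diagonal ((↑) ∘ (√·) ∘ hA.1.eigenvalues) *
  (star hA.1.eigenvectorUnitary : Matrix m m 𝕜)

theorem Matrix.PosSemidef.posSemidef_sqrt {m 𝕜 : Type*} [Fintype m] [DecidableEq m] [RCLike 𝕜]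
    {A : Matrix m m 𝕜} (hA : A.PosSemidef) : hA.sqrt.PosSemidef := by
  apply Matrix.PosSemidef.mul_mul_conjTranspose_same
  refine Matrix.posSemidef_diagonal_iff.mpr fun i ↦ ?_
  rw [Function.comp_apply, RCLike.nonneg_iff]
  constructor
  · simp only [RCLike.ofReal_re]; exact Real.sqrt_nonneg _
  · simp only [RCLike.ofReal_im]

/-- Loewner order: `X ⪯ Y`. -/
def loewner {p : ℕ} (X Y : Mat p) : Prop := (Y - X).PosSemidef

/-- Eigenvalues (unsorted) of `X^{-1/2} Y X^{-1/2}`, i.e. of the pencil `X⁻¹ Y`. -/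
def relEigs {p : ℕ} {X Y : Mat p} (hX : X.PosDef) (hY : Y.IsHermitian) : Fin p → ℝ :=
  Matrix.IsHermitian.eigenvalues (A := hX.posSemidef.sqrt⁻¹ * Y * hX.posSemidef.sqrt⁻¹) (by
    have hS : (hX.posSemidef.sqrt).IsHermitian := hX.posSemidef.posSemidef_sqrt.isHermitian
    have hSi : (hX.posSemidef.sqrt⁻¹).IsHermitian := hS.inv
    have h : hX.posSemidef.sqrt⁻¹ * Y * hX.posSemidef.sqrt⁻¹
        = hX.posSemidef.sqrt⁻¹ * Y * (hX.posSemidef.sqrt⁻¹)ᴴ := by rw [hSi.eq]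
    rw [h]
    exact Matrix.isHermitian_mul_mul_conjTranspose _ hY)

/-- Eigenvalues of a Hermitian matrix, sorted in decreasing order. -/
def eigsDesc {p : ℕ} {Z : Mat p} (hZ : Z.IsHermitian) : Fin p → ℝ :=
  fun i => (hZ.eigenvalues ∘ Tuple.sort hZ.eigenvalues) i.rev

/-- Decreasingly sorted eigenvalues of the pencil `X⁻¹ Y`. -/
def relEigsDesc {p : ℕ} {X Y : Mat p} (hX : X.PosDef) (hY : Y.IsHermitian) : Fin p → ℝ :=
  fun i => ((relEigs hX hY) ∘ Tuple.sort (relEigs hX hY)) i.rev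

/-- Zero-padding of an `a × a` matrix to an `N × N` matrix. -/
def padTo (N : ℕ) {a : ℕ} (A : Mat a) : Mat N :=
  Matrix.of fun i j => if h : (i : ℕ) < a ∧ (j : ℕ) < a then A ⟨i, h.1⟩ ⟨j, h.2⟩ else 0

/-- `diag(P, I)` where `P` is `c × c`. -/
def upPad {s : ℕ} (c : ℕ) (P : Mat c) : Mat s :=
  Matrix.of fun i j =>
    if hi : (i : ℕ) < c then (if hj : (j : ℕ) < c then P ⟨i, hi⟩ ⟨j, hj⟩ else 0)
    else if (i : ℕ) = (j : ℕ) then 1 else 0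

/-- `diag(I_c, T)` where `T` is `(s-c) × (s-c)`. -/
def lowPad {s : ℕ} (c : ℕ) (T : Mat (s - c)) : Mat s :=
  Matrix.of fun i j =>
    if hi : (i : ℕ) < c then (if (i : ℕ) = (j : ℕ) then 1 else 0)
    else if hj : (j : ℕ) < c then 0
    else T ⟨(i : ℕ) - c, by have := i.isLt; omega⟩ ⟨(j : ℕ) - c, by have := j.isLt; omega⟩

/-- The natural isometric inclusion `k^a → k^N` (for `a ≤ N`), as a linear map. -/
def incl (a N : ℕ) : Euc a →ₗ[ℂ] Euc N :=
  Matrix.toEuclideanLin (Matrix.of fun (i : Fin N) (j : Fin a) => if (i : ℕ) = (j : ℕ) then (1 : ℂ) else 0)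

/-- The orthogonal complement of the kernel of (the linear map of) a matrix. -/
def kerPerp {n : ℕ} (A : Mat n) : Submodule ℂ (Euc n) :=
  (LinearMap.ker (Matrix.toEuclideanLin A))ᗮ

/-- Matrix representation `(uᵢ* A uⱼ)` of `A` with respect to a tuple of vectors `u`. -/
def rep {n p : ℕ} (A : Mat n) (u : Fin p → Euc n) : Mat p :=
  Matrix.of fun i j => (inner ℂ (u i) (Matrix.toEuclideanLin A (u j)) : ℂ)

/-- `(u, v)` is a set of principal vectors between `U` and `V` with cosines of principal
angles `σ` (decreasing). -/
def IsPrincipalSystem {N p q : ℕ} (U V : Submodule ℂ (Euc N))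
    (u : Fin p → Euc N) (v : Fin q → Euc N) (σ : Fin (min p q) → ℝ) : Prop :=
  Orthonormal ℂ u ∧ Submodule.span ℂ (Set.range u) = U ∧
  Orthonormal ℂ v ∧ Submodule.span ℂ (Set.range v) = V ∧
  Antitone σ ∧ (∀ i, 0 ≤ σ i) ∧
  ∀ (i : Fin p) (j : Fin q), (inner ℂ (u i) (v j) : ℂ) =
    if h : (i : ℕ) = (j : ℕ) ∧ (i : ℕ) < min p q then ((σ ⟨(i : ℕ), h.2⟩ : ℝ) : ℂ) else 0

/-- Geodesic distance on Grassmannians: square root of the sum of squared principal angles. -/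
def dGr {N : ℕ} (U V : Submodule ℂ (Euc N)) : ℝ :=
  sInf {x | ∃ (u : Fin (Module.finrank ℂ U) → Euc N) (v : Fin (Module.finrank ℂ V) → Euc N)
    (σ : Fin (min (Module.finrank ℂ U) (Module.finrank ℂ V)) → ℝ),
    IsPrincipalSystem U V u v σ ∧ x = Real.sqrt (∑ i, Real.arccos (σ i) ^ 2)}

/-- Generalized Hausdorff value of a function on a subset of a product. -/
def hausd {α β : Type*} (δ : α → β → ℝ) (Z : Set (α × β)) : ℝ :=
  max (sSup {x | ∃ a ∈ Prod.fst '' Z, x = sInf {y | ∃ b, (a, b) ∈ Z ∧ y = δ a b}})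
      (sSup {x | ∃ b ∈ Prod.snd '' Z, x = sInf {y | ∃ a, (a, b) ∈ Z ∧ y = δ a b}})

/-- The set of pairs of matrix representations with respect to all principal vector systems. -/
def ZSet {N p q : ℕ} (A B : Mat N) : Set (Mat p × Mat q) :=
  {z | ∃ u v σ, IsPrincipalSystem (kerPerp A) (kerPerp B) u v σ ∧ z = (rep A u, rep B v)}

/-- The geometric distance `GD_{d,δ}` between PSD matrices of possibly different sizes. -/
def GD {n m p q : ℕ} (d : ∀ N, Submodule ℂ (Euc N) → Submodule ℂ (Euc N) → ℝ)
    (δ : Mat p → Mat q → ℝ) (A : Mat n) (B : Mat m) : ℝ :=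
  Real.sqrt (d (max n m) (kerPerp (padTo (max n m) A)) (kerPerp (padTo (max n m) B)) ^ 2 +
    hausd δ (ZSet (padTo (max n m) A) (padTo (max n m) B)) ^ 2)

end

open Matrix
open scoped ComplexOrder

noncomputable section

/-- The `n × n` matrix `[[0, B], [Bᴴ, 0]]` for `B` of size `r × (n-r)`. -/
def offDiagPad (n r : ℕ) (B : Matrix (Fin r) (Fin (n - r)) ℂ) : Mat n :=
  Matrix.of fun i j =>
    if hi : (i : ℕ) < r then
      (if hj : (j : ℕ) < r then 0 else B ⟨i, hi⟩ ⟨(j : ℕ) - r, by have := j.isLt; omega⟩)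
    else
      (if hj : (j : ℕ) < r then (Bᴴ) ⟨(i : ℕ) - r, by have := i.isLt; omega⟩ ⟨j, hj⟩ else 0)

/-- The vertical space `V_A = { Q diag(M,0) Qᴴ : M Hermitian }`. -/
def Vspace (n r : ℕ) (Q : Mat n) : Set (Mat n) :=
  {X | ∃ M : Mat r, M.IsHermitian ∧ X = Q * padTo n M * Qᴴ}

/-- The horizontal space `H_A = { Q [[0,B],[Bᴴ,0]] Qᴴ }`. -/
def Hspace (n r : ℕ) (Q : Mat n) : Set (Mat n) :=
  {X | ∃ B : Matrix (Fin r) (Fin (n - r)) ℂ, X = Q * offDiagPad n r B * Qᴴ}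

/-- The tangent set of `Herm⁺_{n,r}` at `A`: velocities of curves through `A` staying in
`Herm⁺_{n,r}`. -/
def tangentSet (n r : ℕ) (A : Mat n) : Set (Mat n) :=
  {X | ∃ γ : ℝ → Mat n, γ 0 = A ∧ (∀ t, (γ t).PosSemidef ∧ (γ t).rank = r) ∧
    ∀ i j, HasDerivAt (fun t => γ t i j) (X i j) 0}

/-- The tangent set of the fiber `π_{n,r}⁻¹(π_{n,r}(A))` at `A`, i.e. velocities of curves
through `A` with constant `ker(·)ᗮ`; this is `ker (d_A π_{n,r})`. -/
def fiberTangentSet (n r : ℕ) (A : Mat n) : Set (Mat n) :=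
  {X | ∃ γ : ℝ → Mat n, γ 0 = A ∧ (∀ t, (γ t).PosSemidef ∧ (γ t).rank = r) ∧
    (∀ t, kerPerp (γ t) = kerPerp A) ∧ ∀ i j, HasDerivAt (fun t => γ t i j) (X i j) 0}
section AuxBlocks

open Matrix

variable {n r : ℕ}

/-- The index equivalence `Fin r ⊕ Fin (n-r) ≃ Fin n`. -/
def sumEquiv (hrn : r ≤ n) : (Fin r ⊕ Fin (n - r)) ≃ Fin n :=
  finSumFinEquiv.trans (finCongr (by omega))

lemma sumEquiv_inl (hrn : r ≤ n) (k : Fin r) :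
    ((sumEquiv hrn (Sum.inl k) : Fin n) : ℕ) = (k : ℕ) := by
  simp [sumEquiv]

lemma sumEquiv_inr (hrn : r ≤ n) (k : Fin (n - r)) :
    ((sumEquiv hrn (Sum.inr k) : Fin n) : ℕ) = r + (k : ℕ) := by
  simp [sumEquiv]

lemma sumEquiv_symm_of_lt (hrn : r ≤ n) (i : Fin n) (hi : (i : ℕ) < r) :
    (sumEquiv hrn).symm i = Sum.inl ⟨i, hi⟩ := by
  rw [Equiv.symm_apply_eq]
  exact Fin.ext (by rw [sumEquiv_inl])

lemma sumEquiv_symm_of_ge (hrn : r ≤ n) (i : Fin n) (hi : ¬ (i : ℕ) < r) :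
    (sumEquiv hrn).symm i = Sum.inr ⟨(i : ℕ) - r, by have := i.isLt; omega⟩ := by
  rw [Equiv.symm_apply_eq]
  refine Fin.ext ?_
  rw [sumEquiv_inr]
  show (i : ℕ) = r + ((i : ℕ) - r)
  omega

/-- View an `n × n` matrix as a `2 × 2` block matrix. -/
def blk (hrn : r ≤ n) (X : Mat n) : Matrix (Fin r ⊕ Fin (n - r)) (Fin r ⊕ Fin (n - r)) ℂ :=
  X.submatrix (sumEquiv hrn) (sumEquiv hrn)

lemma blk_injective (hrn : r ≤ n) : Function.Injective (blk hrn) := by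
  intro X Y h
  ext i j
  have := congrFun (congrFun h ((sumEquiv hrn).symm i)) ((sumEquiv hrn).symm j)
  simpa [blk, submatrix_apply] using this

lemma blk_mul (hrn : r ≤ n) (X Y : Mat n) : blk hrn (X * Y) = blk hrn X * blk hrn Y :=
  (submatrix_mul_equiv X Y _ _ _).symm

lemma blk_conjTranspose (hrn : r ≤ n) (X : Mat n) : blk hrn Xᴴ = (blk hrn X)ᴴ := by
  simp [blk, conjTranspose_submatrix]

lemma blk_add (hrn : r ≤ n) (X Y : Mat n) : blk hrn (X + Y) = blk hrn X + blk hrn Y := rfl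

lemma blk_one (hrn : r ≤ n) : blk hrn (1 : Mat n) = 1 :=
  submatrix_one_equiv (sumEquiv hrn)

lemma blk_padTo (hrn : r ≤ n) (M : Mat r) :
    blk hrn (padTo n M) = fromBlocks M 0 0 0 := by
  ext i j
  rcases i with k | k <;> rcases j with l | l <;>
    simp only [blk, submatrix_apply, padTo, of_apply, fromBlocks_apply₁₁, fromBlocks_apply₁₂,
      fromBlocks_apply₂₁, fromBlocks_apply₂₂]
  · have hk := sumEquiv_inl hrn k
    have hl := sumEquiv_inl hrn l
    rw [dif_pos ⟨by omega, by omega⟩]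
    congr 1 <;> exact Fin.ext (by omega)
  · have hk := sumEquiv_inl hrn k
    have hl := sumEquiv_inr hrn l
    rw [dif_neg (by omega)]; rfl
  · have hk := sumEquiv_inr hrn k
    rw [dif_neg (by omega)]; rfl
  · have hk := sumEquiv_inr hrn k
    rw [dif_neg (by omega)]; rfl

lemma blk_offDiagPad (hrn : r ≤ n) (B : Matrix (Fin r) (Fin (n - r)) ℂ) :
    blk hrn (offDiagPad n r B) = fromBlocks 0 B Bᴴ 0 := by
  ext i j
  rcases i with k | k <;> rcases j with l | l <;>
    simp only [blk, submatrix_apply, offDiagPad, of_apply, fromBlocks_apply₁₁, fromBlocks_apply₁₂,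
      fromBlocks_apply₂₁, fromBlocks_apply₂₂]
  · have hk := sumEquiv_inl hrn k
    have hl := sumEquiv_inl hrn l
    rw [dif_pos (by omega), dif_pos (by omega)]; rfl
  · have hk := sumEquiv_inl hrn k
    have hl := sumEquiv_inr hrn l
    rw [dif_pos (by omega), dif_neg (by omega)]
    congr 1 <;> exact Fin.ext (by simp; omega)
  · have hk := sumEquiv_inr hrn k
    have hl := sumEquiv_inl hrn l
    rw [dif_neg (by omega), dif_pos (by omega)]
    congr 1 <;> exact Fin.ext (by simp; omega)
  · have hk := sumEquiv_inr hrn k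
    have hl := sumEquiv_inr hrn l
    rw [dif_neg (by omega), dif_neg (by omega)]; rfl

lemma blk_upPad (hrn : r ≤ n) (E : Mat r) :
    blk hrn (upPad (s := n) r E) = fromBlocks E 0 0 1 := by
  ext i j
  rcases i with k | k <;> rcases j with l | l <;>
    simp only [blk, submatrix_apply, upPad, of_apply, fromBlocks_apply₁₁, fromBlocks_apply₁₂,
      fromBlocks_apply₂₁, fromBlocks_apply₂₂]
  · have hk := sumEquiv_inl hrn k
    have hl := sumEquiv_inl hrn l
    rw [dif_pos (by omega), dif_pos (by omega)]
    congr 1 <;> exact Fin.ext (by omega)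
  · have hk := sumEquiv_inl hrn k
    have hl := sumEquiv_inr hrn l
    rw [dif_pos (by omega), dif_neg (by omega)]; rfl
  · have hk := sumEquiv_inr hrn k
    have hl := sumEquiv_inl hrn l
    rw [dif_neg (by omega), if_neg (by omega)]; rfl
  · have hk := sumEquiv_inr hrn k
    have hl := sumEquiv_inr hrn l
    rw [dif_neg (by omega), hk, hl]
    by_cases h : k = l
    · subst h; rw [if_pos rfl]; exact (Matrix.one_apply_eq k).symm
    · rw [if_neg (fun hc => h (Fin.ext (by omega)))]
      exact (Matrix.one_apply_ne h).symm

end AuxBlocks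
section AuxAlg

open Matrix

variable {n r : ℕ}

lemma padTo_mul (hrn : r ≤ n) (X Y : Mat r) :
    padTo n X * padTo n Y = padTo n (X * Y) := by
  apply blk_injective hrn
  simp [blk_mul, blk_padTo, fromBlocks_multiply]

lemma padTo_conjTranspose (hrn : r ≤ n) (X : Mat r) :
    (padTo n X)ᴴ = padTo n Xᴴ := by
  apply blk_injective hrn
  simp [blk_conjTranspose, blk_padTo, fromBlocks_conjTranspose]

lemma upPad_mul (hrn : r ≤ n) (X Y : Mat r) :
    upPad (s := n) r X * upPad (s := n) r Y = upPad (s := n) r (X * Y) := by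
  apply blk_injective hrn
  simp [blk_mul, blk_upPad, fromBlocks_multiply]

lemma upPad_one (hrn : r ≤ n) : upPad (s := n) r (1 : Mat r) = 1 := by
  apply blk_injective hrn
  simp [blk_upPad, blk_one, fromBlocks_one]

lemma upPad_conjTranspose (hrn : r ≤ n) (X : Mat r) :
    (upPad (s := n) r X)ᴴ = upPad (s := n) r Xᴴ := by
  apply blk_injective hrn
  simp [blk_conjTranspose, blk_upPad, fromBlocks_conjTranspose]

lemma upPad_mul_padTo (hrn : r ≤ n) (E M : Mat r) :
    upPad (s := n) r E * padTo n M = padTo n (E * M) := by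
  apply blk_injective hrn
  simp [blk_mul, blk_upPad, blk_padTo, fromBlocks_multiply]

lemma padTo_mul_upPad (hrn : r ≤ n) (M E : Mat r) :
    padTo n M * upPad (s := n) r E = padTo n (M * E) := by
  apply blk_injective hrn
  simp [blk_mul, blk_upPad, blk_padTo, fromBlocks_multiply]

lemma upPad_isUnit (hrn : r ≤ n) {E : Mat r} (hE : IsUnit E.det) :
    IsUnit (upPad (s := n) r E).det := by
  have h : upPad (s := n) r E * upPad (s := n) r E⁻¹ = 1 := by
    rw [upPad_mul hrn, mul_nonsing_inv _ hE, upPad_one hrn]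
  have := congrArg Matrix.det h
  rw [det_mul, det_one] at this
  exact IsUnit.of_mul_eq_one _ this

lemma offDiagPad_conjTranspose (hrn : r ≤ n) (B : Matrix (Fin r) (Fin (n - r)) ℂ) :
    (offDiagPad n r B)ᴴ = offDiagPad n r B := by
  apply blk_injective hrn
  simp [blk_conjTranspose, blk_offDiagPad, fromBlocks_conjTranspose]

lemma padTo_zero (hrn : r ≤ n) : padTo n (0 : Mat r) = 0 := by
  apply blk_injective hrn
  have : blk hrn (0 : Mat n) = 0 := rfl
  simp [blk_padTo, this]

lemma offDiagPad_zero (hrn : r ≤ n) : offDiagPad n r (0 : Matrix (Fin r) (Fin (n - r)) ℂ) = 0 := by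
  apply blk_injective hrn
  have : blk hrn (0 : Mat n) = 0 := rfl
  simp [blk_offDiagPad, this]

/-- Conjugation of `padTo` by a block-diagonal matrix. -/
lemma conj_padTo (hrn : r ≤ n) {V : Mat n} {V1 : Mat r} {V2 : Mat (n - r)}
    (hV : blk hrn V = fromBlocks V1 0 0 V2) (K : Mat r) :
    V * padTo n K * Vᴴ = padTo n (V1 * K * V1ᴴ) := by
  apply blk_injective hrn
  simp [blk_mul, blk_conjTranspose, blk_padTo, hV, fromBlocks_multiply, fromBlocks_conjTranspose]

/-- Conjugation of `offDiagPad` by a block-diagonal matrix. -/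
lemma conj_offDiagPad (hrn : r ≤ n) {V : Mat n} {V1 : Mat r} {V2 : Mat (n - r)}
    (hV : blk hrn V = fromBlocks V1 0 0 V2) (B : Matrix (Fin r) (Fin (n - r)) ℂ) :
    V * offDiagPad n r B * Vᴴ = offDiagPad n r (V1 * B * V2ᴴ) := by
  apply blk_injective hrn
  simp [blk_mul, blk_conjTranspose, blk_offDiagPad, hV, fromBlocks_multiply,
    fromBlocks_conjTranspose, Matrix.mul_assoc]

/-- A Hermitian matrix whose lower-right block vanishes decomposes as `padTo + offDiagPad`. -/
lemma herm_decomp (hrn : r ≤ n) (Z : Mat n) (hZ : Zᴴ = Z)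
    (h22 : ∀ i j : Fin n, ¬ (i : ℕ) < r → ¬ (j : ℕ) < r → Z i j = 0) :
    Z = padTo n ((blk hrn Z).toBlocks₁₁) + offDiagPad n r ((blk hrn Z).toBlocks₁₂) ∧
      ((blk hrn Z).toBlocks₁₁).IsHermitian := by
  have hblkct : (blk hrn Z)ᴴ = blk hrn Z := by rw [← blk_conjTranspose, hZ]
  constructor
  · apply blk_injective hrn
    rw [blk_add, blk_padTo, blk_offDiagPad]
    have hb := (fromBlocks_toBlocks (blk hrn Z)).symm
    rw [hb]
    have h21 : (blk hrn Z).toBlocks₂₁ = ((blk hrn Z).toBlocks₁₂)ᴴ := by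
      ext k l
      have := congrFun (congrFun hblkct (Sum.inr k)) (Sum.inl l)
      simpa [toBlocks₂₁, toBlocks₁₂, conjTranspose_apply] using this.symm
    have h22' : (blk hrn Z).toBlocks₂₂ = 0 := by
      ext k l
      have hk := sumEquiv_inr hrn k
      have hl := sumEquiv_inr hrn l
      exact h22 _ _ (by omega) (by omega)
    rw [hb, h21, h22', Matrix.fromBlocks_add]
    simp
  · show ((blk hrn Z).toBlocks₁₁)ᴴ = (blk hrn Z).toBlocks₁₁
    ext k l
    have := congrFun (congrFun hblkct (Sum.inl k)) (Sum.inl l)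
    simpa [toBlocks₁₁, conjTranspose_apply] using this

end AuxAlg
section AuxKer

open Matrix

variable {n r : ℕ}

lemma padTo_eq_unblk (hrn : r ≤ n) (P : Mat r) :
    padTo n P = (fromBlocks P 0 0 0).submatrix (sumEquiv hrn).symm (sumEquiv hrn).symm := by
  apply blk_injective hrn
  rw [blk_padTo]
  show _ = ((fromBlocks P 0 0 0).submatrix _ _).submatrix _ _
  rw [submatrix_submatrix]
  simp

lemma padTo_mulVec_eq_zero_iff (hrn : r ≤ n) {P : Mat r} (hP : IsUnit P) (y : Fin n → ℂ) :
    padTo n P *ᵥ y = 0 ↔ ∀ k : Fin r, y (sumEquiv hrn (Sum.inl k)) = 0 := by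
  have hcomp : ∀ g : Fin r ⊕ Fin (n - r) → ℂ, g ∘ ⇑(sumEquiv hrn).symm = 0 ↔ g = 0 := by
    intro g
    constructor
    · intro h; funext z
      have := congrFun h (sumEquiv hrn z); simpa using this
    · intro h; rw [h]; rfl
  rw [padTo_eq_unblk hrn,
    show ((sumEquiv hrn).symm : Fin n → Fin r ⊕ Fin (n - r)) = ((sumEquiv hrn).symm : _ ≃ _) from rfl,
    submatrix_mulVec_equiv, hcomp, fromBlocks_mulVec]
  have hinj := (Matrix.mulVec_injective_iff_isUnit).2 hP
  constructor
  · intro h k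
    have h1 : P *ᵥ ((y ∘ ⇑((sumEquiv hrn).symm).symm) ∘ Sum.inl) = 0 := by
      funext a
      have := congrFun h (Sum.inl a)
      simpa using this
    have h2 : ((y ∘ ⇑((sumEquiv hrn).symm).symm) ∘ Sum.inl) = 0 := by
      apply hinj; rw [h1, Matrix.mulVec_zero]
    simpa using congrFun h2 k
  · intro h
    have h2 : ((y ∘ ⇑((sumEquiv hrn).symm).symm) ∘ Sum.inl) = 0 := by
      funext a; simpa using h a
    funext z
    have h3 : (y ∘ ⇑(sumEquiv hrn)) ∘ Sum.inl = 0 := by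
      funext a; simpa using h a
    rcases z with a | a <;>
      simp [Matrix.mulVec_zero, show y ∘ ⇑(sumEquiv hrn) ∘ Sum.inl = 0 from h3,
        Function.comp_assoc, h3]

lemma ker_conj_padTo (hrn : r ≤ n) {Q : Mat n} (hQ : Q ∈ Matrix.unitaryGroup (Fin n) ℂ)
    {P : Mat r} (hP : IsUnit P) :
    LinearMap.ker (Matrix.toEuclideanLin (Q * padTo n P * Qᴴ)) =
      LinearMap.ker (Matrix.toEuclideanLin (Q * padTo n (1 : Mat r) * Qᴴ)) := by
  have hQ2 : Qᴴ * Q = 1 := by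
    have := Matrix.mem_unitaryGroup_iff'.mp hQ
    simpa [Matrix.star_eq_conjTranspose] using this
  have key : ∀ (P' : Mat r), IsUnit P' → ∀ x : Euc n,
      Matrix.toEuclideanLin (Q * padTo n P' * Qᴴ) x = 0 ↔
        ∀ k : Fin r, (Qᴴ *ᵥ (WithLp.equiv 2 (Fin n → ℂ) x)) (sumEquiv hrn (Sum.inl k)) = 0 := by
    intro P' hP' x
    rw [Matrix.toEuclideanLin_apply]
    rw [show ∀ w : Fin n → ℂ, WithLp.toLp 2 w = 0 ↔ w = 0 from
      fun w => ⟨fun h => congrArg WithLp.ofLp h, fun h => by rw [h]; rfl⟩]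
    change _ ↔ ∀ k : Fin r, (Qᴴ *ᵥ x.ofLp) (sumEquiv hrn (Sum.inl k)) = 0
    set v := x.ofLp with hv
    have hassoc : (Q * padTo n P' * Qᴴ) *ᵥ v = Q *ᵥ (padTo n P' *ᵥ (Qᴴ *ᵥ v)) := by
      rw [← Matrix.mulVec_mulVec, ← Matrix.mulVec_mulVec]
    rw [hassoc]
    have hQinj : ∀ w : Fin n → ℂ, Q *ᵥ w = 0 ↔ w = 0 := by
      intro w
      constructor
      · intro hw
        have := congrArg (fun z => Qᴴ *ᵥ z) hw
        simpa [Matrix.mulVec_mulVec, hQ2, Matrix.mulVec_zero] using this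
      · intro hw; rw [hw, Matrix.mulVec_zero]
    rw [hQinj]
    exact padTo_mulVec_eq_zero_iff hrn hP' _
  ext x
  simp only [LinearMap.mem_ker]
  rw [key P hP x, key 1 isUnit_one x]

end AuxKer
section AuxDeriv

open Matrix

attribute [local instance] Matrix.linftyOpNormedAddCommGroup Matrix.linftyOpNormedRing
  Matrix.linftyOpNormedAlgebra

variable {n r : ℕ}

/-- Entry extraction from a matrix-valued derivative. -/
lemma hasDerivAt_entry {p : ℕ}
    {f : ℝ → Mat p} {D : Mat p} {t : ℝ} (h : HasDerivAt f D t) (i j : Fin p) :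
    HasDerivAt (fun s => f s i j) (D i j) t := by
  haveI hfd : Module.Finite ℝ (Mat p) := Module.Finite.trans ℂ (Mat p)
  let L0 : Mat p →ₗ[ℝ] ℂ :=
    { toFun := fun X => X i j
      map_add' := fun _ _ => rfl
      map_smul' := fun _ _ => rfl }
  let L : Mat p →L[ℝ] ℂ := LinearMap.toContinuousLinearMap L0
  exact (ContinuousLinearMap.hasFDerivAt L (x := f t)).comp_hasDerivAt t h

/-- The basic exponential congruence curve and its derivative at `0`, entrywise. -/
lemma hasDerivAt_expCurve {p : ℕ} (Y A : Mat p) (i j : Fin p) :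
    HasDerivAt
      (fun t : ℝ => (NormedSpace.exp (t • Y) * A * (NormedSpace.exp (t • Y))ᴴ) i j)
      ((Y * A + A * Yᴴ) i j) 0 := by
  have hE : HasDerivAt (fun t : ℝ => NormedSpace.exp (t • Y)) Y 0 := by
    have h := hasDerivAt_exp_smul_const (𝕂 := ℝ) Y 0
    rw [zero_smul, NormedSpace.exp_zero, Matrix.one_mul] at h
    exact h
  have hEij : ∀ a b, HasDerivAt (fun t : ℝ => NormedSpace.exp (t • Y) a b) (Y a b) 0 :=
    fun a b => hasDerivAt_entry hE a b
  have hfun : (fun t : ℝ => (NormedSpace.exp (t • Y) * A * (NormedSpace.exp (t • Y))ᴴ) i j)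
      = fun t : ℝ => ∑ l, (∑ k, NormedSpace.exp (t • Y) i k * A k l) *
          star (NormedSpace.exp (t • Y) j l) := by
    funext t
    simp [Matrix.mul_apply, Matrix.conjTranspose_apply]
  rw [hfun]
  have hE0 : NormedSpace.exp ((0:ℝ) • Y) = 1 := by
    simp [NormedSpace.exp_zero]
  have hder : HasDerivAt
      (fun t : ℝ => ∑ l, (∑ k, NormedSpace.exp (t • Y) i k * A k l) *
          star (NormedSpace.exp (t • Y) j l))
      (∑ l, ((∑ k, Y i k * A k l) * star (NormedSpace.exp ((0:ℝ) • Y) j l)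
        + (∑ k, NormedSpace.exp ((0:ℝ) • Y) i k * A k l) * star (Y j l))) 0 := by
    apply HasDerivAt.fun_sum
    intro l _
    exact ((HasDerivAt.fun_sum (fun k _ => (hEij i k).mul_const (A k l))).mul ((hEij j l).star))
  have : (∑ l, ((∑ k, Y i k * A k l) * star (NormedSpace.exp ((0:ℝ) • Y) j l)
        + (∑ k, NormedSpace.exp ((0:ℝ) • Y) i k * A k l) * star (Y j l)))
      = (Y * A + A * Yᴴ) i j := by
    rw [hE0]
    simp [Matrix.mul_apply, Matrix.add_apply, Matrix.conjTranspose_apply, Matrix.one_apply,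
      Finset.sum_add_distrib, Finset.sum_ite_eq, Finset.sum_ite_eq']
  rw [← this]
  exact hder

end AuxDeriv
section AuxTangent

open Matrix

variable {n r : ℕ}

lemma deriv_isHermitian {γ : ℝ → Mat n} {X : Mat n}
    (hher : ∀ t, (γ t).IsHermitian)
    (hd : ∀ i j, HasDerivAt (fun t => γ t i j) (X i j) 0) : Xᴴ = X := by
  ext i j
  have h1 := (hd j i).star
  have h2 : (fun t => star (γ t j i)) = fun t => γ t i j := by
    funext t
    rw [← Matrix.conjTranspose_apply, (hher t).eq]
  rw [h2] at h1
  have := h1.unique (hd i j)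
  rw [Matrix.conjTranspose_apply, this]

lemma deriv_mulVec_zero {γ : ℝ → Mat n} {X : Mat n} (v : Fin n → ℂ)
    (h0 : ∀ t, γ t *ᵥ v = 0)
    (hd : ∀ i j, HasDerivAt (fun t => γ t i j) (X i j) 0) : X *ᵥ v = 0 := by
  funext i
  have hsum : HasDerivAt (fun t => ∑ j, γ t i j * v j) (∑ j, X i j * v j) 0 :=
    HasDerivAt.fun_sum fun j _ => (hd i j).mul_const (v j)
  have hzero : (fun t => ∑ j, γ t i j * v j) = fun _ => (0 : ℂ) := by
    funext t
    have := congrFun (h0 t) i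
    simpa [Matrix.mulVec, dotProduct] using this
  rw [hzero] at hsum
  have := hsum.unique (hasDerivAt_const 0 0)
  simpa [Matrix.mulVec, dotProduct] using this

lemma deriv_quad_zero {γ : ℝ → Mat n} {X : Mat n}
    (hpsd : ∀ t, (γ t).PosSemidef) (hX : Xᴴ = X) (v : Fin n → ℂ)
    (h00 : γ 0 *ᵥ v = 0)
    (hd : ∀ i j, HasDerivAt (fun t => γ t i j) (X i j) 0) :
    star v ⬝ᵥ (X *ᵥ v) = 0 := by
  set c : ℂ := star v ⬝ᵥ (X *ᵥ v) with hc
  have hf : HasDerivAt (fun t => star v ⬝ᵥ (γ t *ᵥ v)) c 0 := by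
    have : ∀ t, star v ⬝ᵥ (γ t *ᵥ v) = ∑ i, ∑ j, star (v i) * (γ t i j * v j) := by
      intro t
      simp [dotProduct, Matrix.mulVec, Finset.mul_sum]
    have hcs : c = ∑ i, ∑ j, star (v i) * (X i j * v j) := by
      simp [hc, dotProduct, Matrix.mulVec, Finset.mul_sum]
    rw [funext this, hcs]
    exact HasDerivAt.fun_sum fun i _ => HasDerivAt.fun_sum fun j _ =>
      (((hd i j).mul_const (v j)).const_mul (star (v i)))
  have hg : HasDerivAt (fun t => (star v ⬝ᵥ (γ t *ᵥ v)).re) c.re 0 :=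
    by have h := (Complex.reCLM.hasFDerivAt (x := star v ⬝ᵥ (γ 0 *ᵥ v))).comp_hasDerivAt (0:ℝ) hf
       exact h
  have hmin : IsLocalMin (fun t => (star v ⬝ᵥ (γ t *ᵥ v)).re) 0 := by
    apply Filter.Eventually.of_forall
    intro t
    have hnn := (hpsd t).dotProduct_mulVec_nonneg v
    show (star v ⬝ᵥ (γ 0 *ᵥ v)).re ≤ (star v ⬝ᵥ (γ t *ᵥ v)).re
    rw [h00, dotProduct_zero]
    simpa using (Complex.le_def.mp hnn).1
  have hre : c.re = 0 := hmin.hasDerivAt_eq_zero hg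
  have hconj : (starRingEnd ℂ) c = c := by
    rw [hc]
    calc (starRingEnd ℂ) (star v ⬝ᵥ X *ᵥ v) = star (star v ⬝ᵥ X *ᵥ v) := rfl
    _ = star (X *ᵥ v) ⬝ᵥ v := by rw [Matrix.star_dotProduct]; simp
    _ = (star v ᵥ* Xᴴ) ⬝ᵥ v := by rw [Matrix.star_mulVec]
    _ = star v ⬝ᵥ (Xᴴ *ᵥ v) := by rw [Matrix.dotProduct_mulVec]
    _ = star v ⬝ᵥ (X *ᵥ v) := by rw [hX]
  have him : c.im = 0 := by
    have := congrArg Complex.im hconj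
    simp only [Complex.conj_im] at this
    linarith
  exact Complex.ext hre him

lemma quad_to_bilin {X A : Mat n} (hX : Xᴴ = X)
    (h : ∀ v, A *ᵥ v = 0 → star v ⬝ᵥ (X *ᵥ v) = 0)
    {v w : Fin n → ℂ} (hv : A *ᵥ v = 0) (hw : A *ᵥ w = 0) :
    star v ⬝ᵥ (X *ᵥ w) = 0 := by
  have expand : ∀ (a b : Fin n → ℂ), star (a + b) ⬝ᵥ (X *ᵥ (a + b)) =
      star a ⬝ᵥ (X *ᵥ a) + star a ⬝ᵥ (X *ᵥ b) + star b ⬝ᵥ (X *ᵥ a) + star b ⬝ᵥ (X *ᵥ b) := by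
    intro a b
    rw [star_add, Matrix.mulVec_add, add_dotProduct, dotProduct_add,
      dotProduct_add]
    ring
  have h1 := h (v + w) (by rw [Matrix.mulVec_add, hv, hw, add_zero])
  rw [expand, h v hv, h w hw] at h1
  have h2 := h (v + Complex.I • w) (by rw [Matrix.mulVec_add, Matrix.mulVec_smul, hv, hw]; simp)
  rw [expand, h v hv] at h2
  have e1 : star v ⬝ᵥ (X *ᵥ (Complex.I • w)) = Complex.I * (star v ⬝ᵥ (X *ᵥ w)) := by
    rw [Matrix.mulVec_smul, dotProduct_smul]; rfl
  have e2 : star (Complex.I • w) ⬝ᵥ (X *ᵥ v) = - Complex.I * (star w ⬝ᵥ (X *ᵥ v)) := by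
    rw [star_smul, smul_dotProduct]
    simp [Complex.conj_I]
  have e3 : star (Complex.I • w) ⬝ᵥ (X *ᵥ (Complex.I • w)) = star w ⬝ᵥ (X *ᵥ w) := by
    rw [star_smul, smul_dotProduct, Matrix.mulVec_smul, dotProduct_smul]
    simp [Complex.conj_I, smul_smul]
    ring_nf
    simp [Complex.I_sq]
  rw [e1, e2, e3, h w hw] at h2
  set a := star v ⬝ᵥ (X *ᵥ w)
  set b := star w ⬝ᵥ (X *ᵥ v)
  have h2' : Complex.I * (a - b) = 0 := by linear_combination h2
  have hab : a - b = 0 := by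
    rcases mul_eq_zero.mp h2' with h' | h'
    · exact absurd h' Complex.I_ne_zero
    · exact h'
  show a = 0
  linear_combination (h1 + hab) / 2

/-- Entrywise derivative transfer through `P ↦ Q * padTo n P * Qᴴ`. -/
lemma hasDerivAt_conjPad (hrn : r ≤ n) (Q : Mat n) {Pt : ℝ → Mat r} {D : Mat r}
    (h : ∀ a b, HasDerivAt (fun t => Pt t a b) (D a b) 0) (i j : Fin n) :
    HasDerivAt (fun t => (Q * padTo n (Pt t) * Qᴴ) i j) ((Q * padTo n D * Qᴴ) i j) 0 := by
  have hpad : ∀ k l : Fin n, HasDerivAt (fun t => padTo n (Pt t) k l) (padTo n D k l) 0 := by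
    intro k l
    by_cases hkl : (k : ℕ) < r ∧ (l : ℕ) < r
    · have := h ⟨k, hkl.1⟩ ⟨l, hkl.2⟩
      have heq : (fun t => padTo n (Pt t) k l) = fun t => Pt t ⟨k, hkl.1⟩ ⟨l, hkl.2⟩ := by
        funext t; simp [padTo, dif_pos hkl]
      have heq2 : padTo n D k l = D ⟨k, hkl.1⟩ ⟨l, hkl.2⟩ := by simp [padTo, dif_pos hkl]
      rw [heq, heq2]
      exact this
    · have heq : (fun t => padTo n (Pt t) k l) = fun _ => (0 : ℂ) := by
        funext t; simp [padTo, dif_neg hkl]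
      have heq2 : padTo n D k l = 0 := by simp [padTo, dif_neg hkl]
      rw [heq, heq2]
      exact hasDerivAt_const 0 0
  have hfun : (fun t => (Q * padTo n (Pt t) * Qᴴ) i j)
      = fun t => ∑ l, (∑ k, Q i k * padTo n (Pt t) k l) * (Qᴴ) l j := by
    funext t; simp [Matrix.mul_apply]
  have hfun2 : (Q * padTo n D * Qᴴ) i j = ∑ l, (∑ k, Q i k * padTo n D k l) * (Qᴴ) l j := by
    simp [Matrix.mul_apply]
  rw [hfun, hfun2]
  exact HasDerivAt.fun_sum fun l _ =>
    (HasDerivAt.fun_sum fun k _ => (hpad k l).const_mul (Q i k)).mul_const ((Qᴴ) l j)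

end AuxTangent
section AuxHelpers

open Matrix

variable {n r : ℕ}

lemma sandwich {Q : Mat n} (hQ2 : Qᴴ * Q = 1) (X Y : Mat n) :
    (Q * X * Qᴴ) * (Q * Y * Qᴴ) = Q * (X * Y) * Qᴴ := by
  have h : Qᴴ * (Q * (Y * Qᴴ)) = Y * Qᴴ := by
    rw [← Matrix.mul_assoc, hQ2, Matrix.one_mul]
  calc (Q * X * Qᴴ) * (Q * Y * Qᴴ) = Q * (X * (Qᴴ * (Q * (Y * Qᴴ)))) := by
        simp only [Matrix.mul_assoc]
    _ = Q * (X * (Y * Qᴴ)) := by rw [h]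
    _ = Q * (X * Y) * Qᴴ := by simp only [Matrix.mul_assoc]

lemma unconj {Q : Mat n} (hQ1 : Q * Qᴴ = 1) (X : Mat n) :
    Qᴴ * (Q * X * Qᴴ) * Q = X := by
  have h1 : Qᴴ * Q * X * (Qᴴ * Q) = X := by
    have h2 : Qᴴ * Q = 1 := mul_eq_one_comm.mp hQ1
    rw [h2, Matrix.one_mul, Matrix.mul_one]
  calc Qᴴ * (Q * X * Qᴴ) * Q = Qᴴ * Q * X * (Qᴴ * Q) := by simp only [Matrix.mul_assoc]
  _ = X := h1

lemma reconj {Q : Mat n} (hQ1 : Q * Qᴴ = 1) (X : Mat n) :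
    Q * (Qᴴ * X * Q) * Qᴴ = X := by
  calc Q * (Qᴴ * X * Q) * Qᴴ = (Q * Qᴴ) * X * (Q * Qᴴ) := by simp only [Matrix.mul_assoc]
  _ = X := by rw [hQ1, Matrix.one_mul, Matrix.mul_one]

lemma conj_cancel {Q : Mat n} (hQ1 : Q * Qᴴ = 1) {X Y : Mat n}
    (h : Q * X * Qᴴ = Q * Y * Qᴴ) : X = Y := by
  have := congrArg (fun Z => Qᴴ * Z * Q) h
  simpa [unconj hQ1] using this

lemma conj_entry_eq (Q X : Mat n) (k l : Fin n) :
    (Qᴴ * X * Q) k l = star (fun a => Q a k) ⬝ᵥ (X *ᵥ (fun a => Q a l)) := by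
  simp [Matrix.mul_apply, Matrix.mulVec, dotProduct, Matrix.conjTranspose_apply,
    Finset.mul_sum, Finset.sum_mul]
  rw [Finset.sum_comm]
  apply Finset.sum_congr rfl
  intro a _
  apply Finset.sum_congr rfl
  intro b _
  ring

/-- A unitary matrix conjugating one `diag(M,0)` (with `M` positive definite) into another
`diag(M',0)` is block diagonal, with unitary diagonal blocks. -/
lemma unitary_block (hrn : r ≤ n) {U : Mat n} (hU : U ∈ Matrix.unitaryGroup (Fin n) ℂ)
    {M M' : Mat r} (hM : M.PosDef)
    (heq : fromBlocks M' 0 0 0 = (blk hrn U)ᴴ * fromBlocks M 0 0 0 * blk hrn U) :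
    ∃ (U1 : Mat r) (U2 : Mat (n - r)),
      blk hrn U = fromBlocks U1 0 0 U2 ∧ U1 * U1ᴴ = 1 ∧ U1ᴴ * U1 = 1 ∧
        U2 * U2ᴴ = 1 ∧ U2ᴴ * U2 = 1 := by
  set Us := blk hrn U with hUs
  set U11 := Us.toBlocks₁₁ with hU11def
  set U12 := Us.toBlocks₁₂ with hU12def
  set U21 := Us.toBlocks₂₁ with hU21def
  set U22 := Us.toBlocks₂₂ with hU22def
  have t1 : (1 : Matrix (Fin r ⊕ Fin (n - r)) (Fin r ⊕ Fin (n - r)) ℂ).toBlocks₁₁ = 1 := by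
    rw [← fromBlocks_one, toBlocks_fromBlocks₁₁]
  have t2 : (1 : Matrix (Fin r ⊕ Fin (n - r)) (Fin r ⊕ Fin (n - r)) ℂ).toBlocks₂₂ = 1 := by
    rw [← fromBlocks_one, toBlocks_fromBlocks₂₂]
  have hUsb : Us = fromBlocks U11 U12 U21 U22 := (fromBlocks_toBlocks Us).symm
  rw [hUsb] at heq
  rw [fromBlocks_conjTranspose, fromBlocks_multiply, fromBlocks_multiply] at heq
  have h22 : U12ᴴ * (M * U12) = 0 := by
    have := congrArg Matrix.toBlocks₂₂ heq
    simp only [toBlocks_fromBlocks₂₂, Matrix.mul_zero, Matrix.zero_mul, add_zero,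
      zero_add, Matrix.mul_assoc] at this
    exact this.symm
  have hU12 : U12 = 0 := by
    ext k j
    set x : Fin r → ℂ := fun a => U12 a j with hx
    have hq : star x ⬝ᵥ (M *ᵥ x) = 0 := by
      have hentry : star x ⬝ᵥ (M *ᵥ x) = (U12ᴴ * (M * U12)) j j := by
        simp [dotProduct, Matrix.mulVec, Matrix.mul_apply, Matrix.conjTranspose_apply, hx]
      rw [hentry, h22]
      rfl
    have hx0 : x = 0 := by
      by_contra hx0
      have := hM.dotProduct_mulVec_pos hx0
      rw [hq] at this
      exact lt_irrefl 0 this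
    exact congrFun hx0 k
  -- unitarity
  have hQmem := Matrix.mem_unitaryGroup_iff.mp hU
  have hQmem' := Matrix.mem_unitaryGroup_iff'.mp hU
  rw [Matrix.star_eq_conjTranspose] at hQmem hQmem'
  have hUU : Us * Usᴴ = 1 := by
    rw [hUs, ← blk_conjTranspose, ← blk_mul, hQmem, blk_one]
  have hU'U : Usᴴ * Us = 1 := by
    rw [hUs, ← blk_conjTranspose, ← blk_mul, hQmem', blk_one]
  rw [hUsb, hU12] at hUU hU'U
  rw [fromBlocks_conjTranspose, fromBlocks_multiply] at hUU hU'U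
  have e11 : U11 * U11ᴴ = 1 := by
    have := congrArg Matrix.toBlocks₁₁ hUU
    simpa only [toBlocks_fromBlocks₁₁, t1, Matrix.conjTranspose_zero, Matrix.mul_zero,
      Matrix.zero_mul, add_zero, zero_add] using this
  have e11' : U11ᴴ * U11 = 1 := mul_eq_one_comm.mp e11
  have hU21 : U21 = 0 := by
    have h := congrArg Matrix.toBlocks₁₁ hU'U
    simp only [toBlocks_fromBlocks₁₁, t1, Matrix.conjTranspose_zero, Matrix.mul_zero,
      Matrix.zero_mul, add_zero, zero_add] at h
    have : U21ᴴ * U21 = 0 := by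
      linear_combination (norm := abel) h - e11'
    exact Matrix.conjTranspose_mul_self_eq_zero.mp this
  rw [hU21] at hUU hU'U
  have e22' : U22ᴴ * U22 = 1 := by
    have := congrArg Matrix.toBlocks₂₂ hU'U
    simpa only [toBlocks_fromBlocks₂₂, t2, Matrix.conjTranspose_zero, Matrix.mul_zero,
      Matrix.zero_mul, add_zero, zero_add] using this
  have e22 : U22 * U22ᴴ = 1 := mul_eq_one_comm.mp e22'
  exact ⟨U11, U22, by rw [hUsb, hU12, hU21], e11, e11', e22, e22'⟩

end AuxHelpers
/-- Well-definedness of `V_A` and `H_A`, `V_A = ker d_Aπ_{n,r}`, and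
`T_A Herm⁺_{n,r} = V_A ⊕ H_A`. -/
theorem vertical_horizontal_decomposition
    {n r : ℕ} (hrn : r ≤ n) (A : Mat n) (hA : A.PosSemidef) (hr : A.rank = r)
    (Q : Mat n) (hQ : Q ∈ Matrix.unitaryGroup (Fin n) ℂ)
    (M : Mat r) (hM : M.PosDef) (hdec : A = Q * padTo n M * Qᴴ) :
    (∀ Q' ∈ Matrix.unitaryGroup (Fin n) ℂ, ∀ M' : Mat r, M'.PosDef →
      A = Q' * padTo n M' * Q'ᴴ → Vspace n r Q' = Vspace n r Q ∧ Hspace n r Q' = Hspace n r Q) ∧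
    Vspace n r Q = fiberTangentSet n r A ∧
    tangentSet n r A = {X | ∃ V ∈ Vspace n r Q, ∃ H ∈ Hspace n r Q, X = V + H} ∧
    Vspace n r Q ∩ Hspace n r Q = {0} := by
  classical
  -- basic facts
  have hQ1 : Q * Qᴴ = 1 := by
    have := Matrix.mem_unitaryGroup_iff.mp hQ
    rwa [Matrix.star_eq_conjTranspose] at this
  have hQ2 : Qᴴ * Q = 1 := mul_eq_one_comm.mp hQ1
  have hMdet : IsUnit M.det := hM.det_pos.ne'.isUnit
  have hMunit : IsUnit M := (Matrix.isUnit_iff_isUnit_det M).mpr hMdet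
  have hQdet : IsUnit Q.det := by
    have := congrArg Matrix.det hQ1
    rw [Matrix.det_mul, Matrix.det_one] at this
    exact IsUnit.of_mul_eq_one _ this
  have hQHdet : IsUnit (Qᴴ).det := by
    rw [Matrix.det_conjTranspose]
    exact hQdet.star
  have hstarhalf : star (2⁻¹ : ℂ) = (2⁻¹ : ℂ) := by
    simp
  -- the half trick
  have hhalf : ∀ N : Mat r, N.IsHermitian →
      ((2⁻¹ : ℂ) • (N * M⁻¹)) * M + M * ((2⁻¹ : ℂ) • (N * M⁻¹))ᴴ = N := by
    intro N hN
    have h1 : ((2⁻¹ : ℂ) • (N * M⁻¹)) * M = (2⁻¹ : ℂ) • N := by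
      rw [Matrix.smul_mul, Matrix.mul_assoc, Matrix.nonsing_inv_mul M hMdet, Matrix.mul_one]
    have h2 : ((2⁻¹ : ℂ) • (N * M⁻¹))ᴴ = (2⁻¹ : ℂ) • (M⁻¹ * N) := by
      rw [Matrix.conjTranspose_smul, Matrix.conjTranspose_mul, hM.1.inv.eq, hN.eq, hstarhalf]
    have h3 : M * ((2⁻¹ : ℂ) • (M⁻¹ * N)) = (2⁻¹ : ℂ) • N := by
      rw [Matrix.mul_smul, ← Matrix.mul_assoc, Matrix.mul_nonsing_inv M hMdet, Matrix.one_mul]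
    rw [h1, h2, h3, ← add_smul]
    norm_num
  -- columns of A beyond r are in the kernel
  have hAcol : ∀ j : Fin n, ¬ (j : ℕ) < r → A *ᵥ (fun k => Q k j) = 0 := by
    intro j hj
    have hAQ : A * Q = Q * padTo n M := by
      rw [hdec, Matrix.mul_assoc, hQ2, Matrix.mul_one]
    funext i
    have h1 : (A *ᵥ fun k => Q k j) i = (A * Q) i j := by
      simp [Matrix.mul_apply, Matrix.mulVec, dotProduct]
    rw [h1, hAQ]
    simp only [Matrix.mul_apply, padTo, Matrix.of_apply, Pi.zero_apply]
    apply Finset.sum_eq_zero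
    intro k _
    rw [dif_neg (by omega)]
    ring
  -- vertical curves: every Hermitian N gives a fiber tangent vector
  have hcurveV : ∀ N : Mat r, N.IsHermitian → (Q * padTo n N * Qᴴ) ∈ fiberTangentSet n r A := by
    intro N hN
    set W : Mat r := (2⁻¹ : ℂ) • (N * M⁻¹) with hW
    refine ⟨fun t => Q * padTo n (NormedSpace.exp (t • W) * M * (NormedSpace.exp (t • W))ᴴ)
      * Qᴴ, ?_, ?_, ?_, ?_⟩
    · dsimp only
      rw [zero_smul, NormedSpace.exp_zero, Matrix.conjTranspose_one, Matrix.mul_one,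
        Matrix.one_mul, ← hdec]
    · intro t
      dsimp only
      set Et : Mat r := NormedSpace.exp (t • W) with hEt
      have hEunit : IsUnit Et := Matrix.isUnit_exp (t • W)
      have hEdet : IsUnit Et.det := (Matrix.isUnit_iff_isUnit_det Et).mp hEunit
      set G : Mat n := Q * upPad (s := n) r Et * Qᴴ with hG
      have hGt : Gᴴ = Q * upPad (s := n) r Etᴴ * Qᴴ := by
        rw [hG, Matrix.conjTranspose_mul, Matrix.conjTranspose_mul,
          Matrix.conjTranspose_conjTranspose, upPad_conjTranspose hrn]
        simp only [Matrix.mul_assoc]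
      have hGA : G * A * Gᴴ = Q * padTo n (Et * M * Etᴴ) * Qᴴ := by
        rw [hdec, hGt, hG, sandwich hQ2, sandwich hQ2, upPad_mul_padTo hrn,
          padTo_mul_upPad hrn]
      have hGdet : IsUnit G.det := by
        rw [hG, Matrix.det_mul, Matrix.det_mul]
        exact (hQdet.mul (upPad_isUnit hrn hEdet)).mul hQHdet
      have hGHdet : IsUnit (Gᴴ).det := by
        rw [Matrix.det_conjTranspose]
        exact hGdet.star
      constructor
      · rw [← hGA]
        exact hA.mul_mul_conjTranspose_same G
      · rw [← hGA]
        calc (G * A * Gᴴ).rank = (G * A).rank :=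
              Matrix.rank_mul_eq_left_of_isUnit_det Gᴴ (G * A) hGHdet
        _ = A.rank := Matrix.rank_mul_eq_right_of_isUnit_det G A hGdet
        _ = r := hr
    · intro t
      dsimp only
      set Et : Mat r := NormedSpace.exp (t • W) with hEt
      have hEunit : IsUnit Et := Matrix.isUnit_exp (t • W)
      have hEHunit : IsUnit Etᴴ := by
        apply (Matrix.isUnit_iff_isUnit_det _).mpr
        rw [Matrix.det_conjTranspose]
        exact ((Matrix.isUnit_iff_isUnit_det Et).mp hEunit).star
      have hPunit : IsUnit (Et * M * Etᴴ) := (hEunit.mul hMunit).mul hEHunit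
      show kerPerp _ = kerPerp A
      rw [hdec]
      simp only [kerPerp]
      rw [ker_conj_padTo hrn hQ hPunit, ker_conj_padTo hrn hQ hMunit]
    · intro i j
      dsimp only
      have hder := hasDerivAt_conjPad hrn Q
        (Pt := fun t => NormedSpace.exp (t • W) * M * (NormedSpace.exp (t • W))ᴴ)
        (D := W * M + M * Wᴴ) (fun a b => hasDerivAt_expCurve W M a b) i j
      rw [hhalf N hN] at hder
      exact hder
  -- G2
  have hG2 : Vspace n r Q = fiberTangentSet n r A := by
    apply Set.Subset.antisymm
    · rintro X ⟨N, hN, rfl⟩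
      exact hcurveV N hN
    · rintro X ⟨γ, hγ0, hps, hker, hd⟩
      have hXh : Xᴴ = X := deriv_isHermitian (fun t => (hps t).1.1) hd
      have hkerEq : ∀ t, LinearMap.ker (Matrix.toEuclideanLin (γ t)) =
          LinearMap.ker (Matrix.toEuclideanLin A) := by
        intro t
        have h := congrArg Submodule.orthogonal (hker t)
        simpa only [kerPerp, Submodule.orthogonal_orthogonal] using h
      have hcols : ∀ j : Fin n, ¬ (j : ℕ) < r → X *ᵥ (fun k => Q k j) = 0 := by
        intro j hj
        apply deriv_mulVec_zero _ _ hd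
        intro t
        have hvmem : (WithLp.equiv 2 (Fin n → ℂ)).symm (fun k => Q k j) ∈
            LinearMap.ker (Matrix.toEuclideanLin (γ t)) := by
          rw [hkerEq t, LinearMap.mem_ker, Matrix.toEuclideanLin_apply,
            show ((WithLp.equiv 2 (Fin n → ℂ)).symm fun k => Q k j).ofLp = fun k => Q k j from rfl,
            hAcol j hj]
          rfl
        rw [LinearMap.mem_ker, Matrix.toEuclideanLin_apply,
          show ((WithLp.equiv 2 (Fin n → ℂ)).symm fun k => Q k j).ofLp = fun k => Q k j from rfl] at hvmem
        have := congrArg (WithLp.equiv 2 (Fin n → ℂ)) hvmem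
        simpa using this
      set Z : Mat n := Qᴴ * X * Q with hZdef
      have hZh : Zᴴ = Z := by
        rw [hZdef, Matrix.conjTranspose_mul, Matrix.conjTranspose_mul,
          Matrix.conjTranspose_conjTranspose, hXh, Matrix.mul_assoc]
      have hZcol : ∀ (k l : Fin n), ¬ (l : ℕ) < r → Z k l = 0 := by
        intro k l hl
        rw [hZdef, conj_entry_eq, hcols l hl, dotProduct_zero]
      obtain ⟨hZdec, hZ11h⟩ := herm_decomp hrn Z hZh (fun i j _ hj => hZcol i j hj)
      have hZ12 : (blk hrn Z).toBlocks₁₂ = 0 := by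
        ext a b
        have hb := sumEquiv_inr hrn b
        exact hZcol _ _ (by omega)
      rw [hZ12, offDiagPad_zero hrn, add_zero] at hZdec
      refine ⟨(blk hrn Z).toBlocks₁₁, hZ11h, ?_⟩
      rw [← hZdec, hZdef]
      exact (reconj hQ1 X).symm
  -- G3
  have hG3 : tangentSet n r A = {X | ∃ V ∈ Vspace n r Q, ∃ H ∈ Hspace n r Q, X = V + H} := by
    apply Set.Subset.antisymm
    · rintro X ⟨γ, hγ0, hps, hd⟩
      have hXh : Xᴴ = X := deriv_isHermitian (fun t => (hps t).1.1) hd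
      have hquad : ∀ v, A *ᵥ v = 0 → star v ⬝ᵥ (X *ᵥ v) = 0 := by
        intro v hv
        exact deriv_quad_zero (fun t => (hps t).1) hXh v (by rw [hγ0]; exact hv) hd
      set Z : Mat n := Qᴴ * X * Q with hZdef
      have hZh : Zᴴ = Z := by
        rw [hZdef, Matrix.conjTranspose_mul, Matrix.conjTranspose_mul,
          Matrix.conjTranspose_conjTranspose, hXh, Matrix.mul_assoc]
      have hZ22 : ∀ i j : Fin n, ¬ (i : ℕ) < r → ¬ (j : ℕ) < r → Z i j = 0 := by
        intro i j hi hj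
        rw [hZdef, conj_entry_eq]
        exact quad_to_bilin hXh hquad (hAcol i hi) (hAcol j hj)
      obtain ⟨hZdec, hZ11h⟩ := herm_decomp hrn Z hZh hZ22
      refine ⟨Q * padTo n ((blk hrn Z).toBlocks₁₁) * Qᴴ, ⟨_, hZ11h, rfl⟩,
        Q * offDiagPad n r ((blk hrn Z).toBlocks₁₂) * Qᴴ, ⟨_, rfl⟩, ?_⟩
      calc X = Q * Z * Qᴴ := by rw [hZdef]; exact (reconj hQ1 X).symm
      _ = Q * (padTo n ((blk hrn Z).toBlocks₁₁) + offDiagPad n r ((blk hrn Z).toBlocks₁₂)) * Qᴴ := by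
          rw [← hZdec]
      _ = _ := by rw [Matrix.mul_add, Matrix.add_mul]
    · rintro X ⟨V, ⟨N, hN, rfl⟩, H, ⟨B, rfl⟩, rfl⟩
      set W : Mat r := (2⁻¹ : ℂ) • (N * M⁻¹) with hWdef
      set C : Matrix (Fin r) (Fin (n - r)) ℂ := M⁻¹ * B with hCdef
      set Y' : Mat n := padTo n W + offDiagPad n r C with hY'def
      set Y : Mat n := Q * Y' * Qᴴ with hYdef
      have hMC : M * C = B := by
        rw [hCdef, ← Matrix.mul_assoc, Matrix.mul_nonsing_inv M hMdet, Matrix.one_mul]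
      have hCM : Cᴴ * M = Bᴴ := by
        rw [hCdef, Matrix.conjTranspose_mul, hM.1.inv.eq, Matrix.mul_assoc,
          Matrix.nonsing_inv_mul M hMdet, Matrix.mul_one]
      have hcore : Y' * padTo n M + padTo n M * Y'ᴴ = padTo n N + offDiagPad n r B := by
        apply blk_injective hrn
        rw [blk_add, blk_add, blk_mul, blk_mul, blk_conjTranspose, hY'def, blk_add,
          blk_padTo, blk_padTo, blk_padTo, blk_offDiagPad, blk_offDiagPad]
        rw [Matrix.fromBlocks_add, Matrix.fromBlocks_conjTranspose]
        simp only [add_zero, zero_add, Matrix.conjTranspose_zero,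
          Matrix.conjTranspose_conjTranspose]
        rw [fromBlocks_multiply, fromBlocks_multiply, Matrix.fromBlocks_add]
        simp only [Matrix.mul_zero, Matrix.zero_mul, add_zero, zero_add]
        rw [hMC, hCM, hhalf N hN, Matrix.fromBlocks_add]
        simp
      have hYH : Yᴴ = Q * Y'ᴴ * Qᴴ := by
        rw [hYdef, Matrix.conjTranspose_mul, Matrix.conjTranspose_mul,
          Matrix.conjTranspose_conjTranspose]
        simp only [Matrix.mul_assoc]
      have hYid : Y * A + A * Yᴴ
          = Q * padTo n N * Qᴴ + Q * offDiagPad n r B * Qᴴ := by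
        rw [hdec, hYH, hYdef, sandwich hQ2, sandwich hQ2, ← Matrix.add_mul,
          ← Matrix.mul_add, hcore, Matrix.mul_add, Matrix.add_mul]
      refine ⟨fun t => NormedSpace.exp (t • Y) * A * (NormedSpace.exp (t • Y))ᴴ,
        ?_, ?_, ?_⟩
      · dsimp only
        rw [zero_smul, NormedSpace.exp_zero, Matrix.conjTranspose_one, Matrix.mul_one,
          Matrix.one_mul]
      · intro t
        dsimp only
        set Et : Mat n := NormedSpace.exp (t • Y) with hEt
        have hEunit : IsUnit Et := Matrix.isUnit_exp (t • Y)
        have hEdet : IsUnit Et.det := (Matrix.isUnit_iff_isUnit_det Et).mp hEunit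
        have hEHdet : IsUnit (Etᴴ).det := by
          rw [Matrix.det_conjTranspose]; exact hEdet.star
        constructor
        · exact hA.mul_mul_conjTranspose_same Et
        · calc (Et * A * Etᴴ).rank = (Et * A).rank :=
              Matrix.rank_mul_eq_left_of_isUnit_det Etᴴ (Et * A) hEHdet
          _ = A.rank := Matrix.rank_mul_eq_right_of_isUnit_det Et A hEdet
          _ = r := hr
      · intro i j
        dsimp only
        have hder := hasDerivAt_expCurve Y A i j
        rw [hYid] at hder
        exact hder
  -- G4
  have hG4 : Vspace n r Q ∩ Hspace n r Q = {0} := by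
    apply Set.Subset.antisymm
    · rintro X ⟨⟨N, hN, hXN⟩, ⟨B, hXB⟩⟩
      have hNB : padTo n N = offDiagPad n r B := conj_cancel hQ1 (hXN.symm.trans hXB)
      have hN0 : N = 0 := by
        have := congrArg (blk hrn) hNB
        rw [blk_padTo, blk_offDiagPad] at this
        have h11 := congrArg Matrix.toBlocks₁₁ this
        simpa only [toBlocks_fromBlocks₁₁] using h11
      rw [hXN, hN0, padTo_zero hrn, Matrix.mul_zero, Matrix.zero_mul]
      rfl
    · rintro X rfl
      refine ⟨⟨0, Matrix.isHermitian_zero, ?_⟩, ⟨0, ?_⟩⟩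
      · rw [padTo_zero hrn, Matrix.mul_zero, Matrix.zero_mul]
      · rw [offDiagPad_zero hrn, Matrix.mul_zero, Matrix.zero_mul]
  -- G1
  refine ⟨?_, hG2, hG3, hG4⟩
  intro Q' hQ' M' hM' hdec'
  have hQ'1 : Q' * Q'ᴴ = 1 := by
    have := Matrix.mem_unitaryGroup_iff.mp hQ'
    rwa [Matrix.star_eq_conjTranspose] at this
  set U : Mat n := Qᴴ * Q' with hUdef
  have hUmem : U ∈ Matrix.unitaryGroup (Fin n) ℂ := by
    rw [hUdef, ← Matrix.star_eq_conjTranspose]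
    exact mul_mem (Unitary.star_mem hQ) hQ'
  have hUU1 : U * Uᴴ = 1 := by
    have := Matrix.mem_unitaryGroup_iff.mp hUmem
    rwa [Matrix.star_eq_conjTranspose] at this
  have hpad' : padTo n M' = Uᴴ * padTo n M * U := by
    have h1 : Q'ᴴ * A * Q' = padTo n M' := by rw [hdec']; exact unconj hQ'1 _
    have h2 : Q'ᴴ * A * Q' = Uᴴ * padTo n M * U := by
      rw [hdec, hUdef, Matrix.conjTranspose_mul, Matrix.conjTranspose_conjTranspose]
      simp only [Matrix.mul_assoc]
    rw [← h1, h2]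
  have heq : fromBlocks M' 0 0 0 = (blk hrn U)ᴴ * fromBlocks M 0 0 0 * blk hrn U := by
    rw [← blk_padTo hrn M', hpad', blk_mul, blk_mul, blk_conjTranspose, blk_padTo]
  obtain ⟨U1, U2, hblkU, e11, e11', e22, e22'⟩ := unitary_block hrn hUmem hM heq
  have hblkUH : blk hrn Uᴴ = fromBlocks U1ᴴ 0 0 U2ᴴ := by
    rw [blk_conjTranspose, hblkU, fromBlocks_conjTranspose]
    simp
  have hQ'QU : Q' = Q * U := by
    rw [hUdef, ← Matrix.mul_assoc, hQ1, Matrix.one_mul]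
  have hQQ'U : Q = Q' * Uᴴ := by
    rw [hQ'QU, Matrix.mul_assoc, hUU1, Matrix.mul_one]
  have hconjshape : ∀ (R S : Mat n) (P : Mat n),
      (R * S) * P * (R * S)ᴴ = R * (S * P * Sᴴ) * Rᴴ := by
    intro R S P
    rw [Matrix.conjTranspose_mul]
    simp only [Matrix.mul_assoc]
  constructor
  · ext X
    constructor
    · rintro ⟨K, hK, rfl⟩
      refine ⟨U1 * K * U1ᴴ, Matrix.isHermitian_mul_mul_conjTranspose U1 hK, ?_⟩
      rw [hQ'QU, hconjshape, conj_padTo hrn hblkU K]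
    · rintro ⟨K, hK, rfl⟩
      refine ⟨U1ᴴ * K * U1, ?_, ?_⟩
      · have := Matrix.isHermitian_mul_mul_conjTranspose U1ᴴ hK
        simpa using this
      · rw [hQQ'U, hconjshape, conj_padTo hrn hblkUH K]
        simp
  · ext X
    constructor
    · rintro ⟨B, rfl⟩
      refine ⟨U1 * B * U2ᴴ, ?_⟩
      rw [hQ'QU, hconjshape, conj_offDiagPad hrn hblkU B]
    · rintro ⟨B, rfl⟩
      refine ⟨U1ᴴ * B * U2, ?_⟩
      rw [hQQ'U, hconjshape, conj_offDiagPad hrn hblkUH B]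
      simp

end
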